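/- arXiv:1503.07377 — 12 statements merged into one kernel-verified Lean document; each statement's English description precedes it below -/
import Mathlib

section
/- Let N ≥ 2 be a natural number and 0 < c ≤ N. Then for every x ∈ ℝ^N with x_i ≥ 0 for all i, the total cost in the star-topology security game satisfies exp(−∑_{j=1}^N x_j) + ∑_{j=2}^N exp(−x_1 − x_j) + c ∑_{i=1}^N x_i ≥ c(1 + ln(N/c)); that is, the profile with x_1 = ln(N/c) and x_j = 0 for all j = 2,…,N (only the root invests) is socially optimal, achieving total cost c(1 + ln(N/c)). -/
open Finset Real

/-- In the star-topology security game with exponential risk and unit cost `c ≤ N`,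
every nonnegative profile has total cost at least `c(1 + ln(N/c))`, the value achieved
when only the root (user `0`) invests `ln(N/c)`. -/
theorem star_topology_social_optimum
    (N : ℕ) [NeZero N] (hN : 2 ≤ N) (c : ℝ) (hc : 0 < c) (hcN : c ≤ N)
    (x : Fin N → ℝ) (hx : ∀ i, 0 ≤ x i) :
    c * (1 + Real.log (N / c)) ≤
      Real.exp (-(∑ j, x j))
        + (∑ j ∈ Finset.univ.erase 0, Real.exp (-(x 0) - x j))
        + c * ∑ i, x i := by
  set S := ∑ i, x i with hS
  have hNc : (0:ℝ) < N / c := div_pos (by positivity) hc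
  -- each leaf term dominates exp(-S)
  have key : ∀ j ∈ Finset.univ.erase (0 : Fin N),
      Real.exp (-S) ≤ Real.exp (-(x 0) - x j) := by
    intro j hj
    apply Real.exp_le_exp.mpr
    have hj0 : j ≠ 0 := Finset.ne_of_mem_erase hj
    have h1 : x j ≤ ∑ k ∈ Finset.univ.erase 0, x k :=
      Finset.single_le_sum (fun k _ => hx k)
        (Finset.mem_erase.mpr ⟨hj0, Finset.mem_univ j⟩)
    have h2 : x 0 + ∑ k ∈ Finset.univ.erase 0, x k = S :=
      Finset.add_sum_erase _ x (Finset.mem_univ 0)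
    linarith
  have hcard : (Finset.univ.erase (0:Fin N)).card = N - 1 := by
    simp [Finset.card_erase_of_mem]
  have hsum : ((N:ℝ) - 1) * Real.exp (-S) ≤
      ∑ j ∈ Finset.univ.erase 0, Real.exp (-(x 0) - x j) := by
    have h := Finset.card_nsmul_le_sum (Finset.univ.erase (0:Fin N))
      (fun j => Real.exp (-(x 0) - x j)) (Real.exp (-S)) key
    rw [hcard, nsmul_eq_mul] at h
    have : ((N - 1 : ℕ) : ℝ) = (N:ℝ) - 1 := by
      push_cast [Nat.cast_sub (by omega : 1 ≤ N)]; ring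
    linarith [h, this ▸ h]
  -- convexity bound
  have hmain : Real.log (N/c) - S + 1 ≤ Real.exp (Real.log (N/c) - S) :=
    Real.add_one_le_exp _
  have hexp : Real.exp (Real.log (N/c) - S) = (N/c) * Real.exp (-S) := by
    rw [Real.exp_sub, Real.exp_log hNc, Real.exp_neg]
    ring
  have h3 : c * (Real.log (N/c) - S + 1) ≤ (N:ℝ) * Real.exp (-S) := by
    have := mul_le_mul_of_nonneg_left hmain hc.le
    rw [hexp] at this
    have heq : c * ((N/c) * Real.exp (-S)) = (N:ℝ) * Real.exp (-S) := by
      field_simp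
    linarith [this, heq ▸ this]
  nlinarith [h3, hsum, Real.exp_pos (-S)]
end

section
/- Let N ≥ 3 be a natural number and c > 0. Suppose t ∈ ℝ^N satisfies the voluntary participation constraints of the star-topology game with exponential risk: t_1 ≤ c − c/N − c·ln N and t_j ≤ c/(N−1) − c/N for every j = 2,…,N. Then ∑_{i=1}^N t_i ≤ c(1 − ln N) < 0; in particular, weak budget balance fails for any such tax vector. -/
open Finset Real

/-- In the star-topology game with exponential risk, any tax vector satisfying the
voluntary participation constraints of the root (`t 0 ≤ c − c/N − c ln N`) and of every
leaf (`t j ≤ c/(N−1) − c/N`) has total sum at most `c(1 − ln N) < 0`; weak budget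
balance fails. -/
theorem star_topology_no_budget_balance
    (N : ℕ) [NeZero N] (hN : 3 ≤ N) (c : ℝ) (hc : 0 < c)
    (t : Fin N → ℝ)
    (ht_root : t 0 ≤ c - c / N - c * Real.log N)
    (ht_leaf : ∀ j : Fin N, j ≠ 0 → t j ≤ c / (N - 1) - c / N) :
    (∑ i, t i) ≤ c * (1 - Real.log N) ∧ c * (1 - Real.log N) < 0 := by
  have hN3 : (3:ℝ) ≤ (N:ℝ) := by exact_mod_cast hN
  have hNpos : (0:ℝ) < N := by linarith
  have hN1 : (0:ℝ) < (N:ℝ) - 1 := by linarith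
  constructor
  · have hsum : (∑ i, t i) = t 0 + ∑ i ∈ univ.erase 0, t i := by
      rw [add_comm, Finset.sum_erase_add _ _ (mem_univ 0)]
    rw [hsum]
    have hle : ∑ i ∈ univ.erase 0, t i ≤
        ∑ _i ∈ univ.erase (0 : Fin N), (c / ((N:ℝ) - 1) - c / N) := by
      apply Finset.sum_le_sum
      intro i hi
      exact ht_leaf i (Finset.ne_of_mem_erase hi)
    have hcard : (univ.erase (0 : Fin N)).card = N - 1 := by
      rw [Finset.card_erase_of_mem (mem_univ 0), Finset.card_univ, Fintype.card_fin]
    have hcast : ((N - 1 : ℕ) : ℝ) = (N:ℝ) - 1 := by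
      have : 1 ≤ N := by omega
      push_cast [this]; ring
    rw [Finset.sum_const, hcard, nsmul_eq_mul, hcast] at hle
    have hval : ((N:ℝ) - 1) * (c / ((N:ℝ) - 1) - c / N)
        = c - ((N:ℝ) - 1) * c / N := by
      field_simp
    rw [hval] at hle
    have : t 0 + ∑ i ∈ univ.erase 0, t i
        ≤ (c - c / N - c * Real.log N) + (c - ((N:ℝ) - 1) * c / N) :=
      add_le_add ht_root hle
    have heq : (c - c / N - c * Real.log N) + (c - ((N:ℝ) - 1) * c / N)
        = c * (1 - Real.log N) := by
      field_simp
      ring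
    linarith [heq ▸ this]
  · have hlog : 1 < Real.log N := by
      rw [show (1:ℝ) = Real.log (Real.exp 1) by rw [Real.log_exp]]
      apply Real.log_lt_log (Real.exp_pos 1)
      have := Real.exp_one_lt_d9
      linarith
    nlinarith
end

section
/- Let ρ > 0, c > 0, and let N ≥ 1 be a natural number with c^ρ ≤ N. Then for every x ∈ ℝ^N with x_j ≥ 0 for all j, N·(∑_{j=1}^N exp(−ρ x_j))^{1/ρ} + c ∑_{j=1}^N x_j ≥ cN·(1 + (1/ρ)·ln(N/c^ρ)); that is, the symmetric profile x_i = (1/ρ)·ln(N/c^ρ) for all i is socially optimal in the approximate weakest-link game, achieving total cost cN(1 + (1/ρ)ln(N/c^ρ)). -/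
open Finset Real

/-- In the approximate weakest-link game with smoothing parameter `ρ` and unit cost `c`
with `c^ρ ≤ N`, every nonnegative profile has total cost at least
`cN(1 + (1/ρ)ln(N/c^ρ))`, the value achieved by the symmetric profile
`x_i = (1/ρ)ln(N/c^ρ)`. -/
theorem weakest_link_social_optimum
    (ρ c : ℝ) (hρ : 0 < ρ) (hc : 0 < c)
    (N : ℕ) (hN : 1 ≤ N) (hcN : c ^ ρ ≤ N)
    (x : Fin N → ℝ) (hx : ∀ j, 0 ≤ x j) :
    c * N * (1 + (1 / ρ) * Real.log (N / c ^ ρ)) ≤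
      N * (∑ j, Real.exp (-ρ * x j)) ^ (1 / ρ : ℝ) + c * ∑ j, x j := by
  have hN0 : (0:ℝ) < N := by exact_mod_cast hN
  set T := ∑ j, x j with hT
  set S := ∑ j, Real.exp (-ρ * x j) with hS
  have hne : (Finset.univ : Finset (Fin N)).Nonempty := ⟨⟨0, by omega⟩, Finset.mem_univ _⟩
  have hSpos : 0 < S := Finset.sum_pos (fun j _ => Real.exp_pos _) hne
  set m : ℝ := -(ρ / N) * T with hm
  -- Jensen-type bound via exp tangent line: S ≥ N * exp m
  have hsumz : ∑ j, (-ρ * x j) = (N : ℝ) * m := by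
    rw [← Finset.mul_sum, hm]
    field_simp
    ring
  have key : (N : ℝ) * Real.exp m ≤ S := by
    have h1 : ∀ j ∈ (Finset.univ : Finset (Fin N)),
        Real.exp m * ((-ρ * x j - m) + 1) ≤ Real.exp (-ρ * x j) := by
      intro j _
      have := Real.add_one_le_exp (-ρ * x j - m)
      calc Real.exp m * ((-ρ * x j - m) + 1) ≤ Real.exp m * Real.exp (-ρ * x j - m) := by
            nlinarith [Real.exp_pos m]
        _ = Real.exp (-ρ * x j) := by rw [← Real.exp_add]; ring_nf
    have h2 : ∑ j, Real.exp m * ((-ρ * x j - m) + 1) ≤ S := Finset.sum_le_sum h1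
    have h3 : ∑ j, Real.exp m * ((-ρ * x j - m) + 1) = (N : ℝ) * Real.exp m := by
      rw [← Finset.mul_sum]
      have : ∑ j, ((-ρ * x j - m) + 1) = (∑ j, (-ρ * x j)) - N * m + N := by
        rw [Finset.sum_add_distrib, Finset.sum_sub_distrib]
        simp [Finset.card_univ, mul_comm]
      rw [this, hsumz]
      ring
    linarith
  have hlogS : Real.log N + m ≤ Real.log S := by
    have := Real.log_le_log (by positivity) key
    rwa [Real.log_mul (ne_of_gt hN0) (Real.exp_ne_zero m), Real.log_exp] at this
  -- pointwise bound: S^(1/ρ) ≥ c - c log c + (c/ρ) log S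
  have hB : c - c * Real.log c + (c / ρ) * Real.log S ≤ S ^ (1 / ρ : ℝ) := by
    set u := S ^ (1 / ρ : ℝ) with hu
    have hupos : 0 < u := Real.rpow_pos_of_pos hSpos _
    have hlogu : Real.log u = (1 / ρ) * Real.log S := Real.log_rpow hSpos _
    have h4 : Real.log (u / c) ≤ u / c - 1 := Real.log_le_sub_one_of_pos (by positivity)
    rw [Real.log_div (ne_of_gt hupos) (ne_of_gt hc)] at h4
    have h5 : c * (Real.log u - Real.log c) ≤ u - c := by
      have := mul_le_mul_of_nonneg_left h4 (le_of_lt hc)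
      calc c * (Real.log u - Real.log c) ≤ c * (u / c - 1) := this
        _ = u - c := by field_simp
    have h6 : c * Real.log u = c / ρ * Real.log S := by rw [hlogu]; ring
    linarith
  -- rewrite the target
  have hlogdiv : Real.log ((N : ℝ) / c ^ ρ) = Real.log N - ρ * Real.log c := by
    rw [Real.log_div (ne_of_gt hN0) (ne_of_gt (Real.rpow_pos_of_pos hc ρ)),
      Real.log_rpow hc]
  rw [hlogdiv]
  have hmT : (c * N / ρ) * m = -(c * T) := by
    rw [hm]; field_simp
  have h6 : (N : ℝ) * (c - c * Real.log c + (c / ρ) * Real.log S) ≤ N * S ^ (1 / ρ : ℝ) :=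
    mul_le_mul_of_nonneg_left hB (le_of_lt hN0)
  have h7 : (c * N / ρ) * (Real.log N + m) ≤ (c * N / ρ) * Real.log S :=
    mul_le_mul_of_nonneg_left hlogS (by positivity)
  have hρ' : ρ ≠ 0 := ne_of_gt hρ
  have hexpand : c * N * (1 + (1 / ρ) * (Real.log N - ρ * Real.log c)) =
      c * N - c * N * Real.log c + (c * N / ρ) * Real.log N := by
    field_simp; ring
  rw [hexpand]
  have h8 : (N : ℝ) * (c / ρ) * Real.log S = (c * N / ρ) * Real.log S := by ring
  nlinarith [h6, h7, hmT]
end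

section
/- Let ρ > 0, c > 0, and let N ≥ 2 be a natural number. Define x = (1/ρ)·ln(2^{1−ρ}/c^ρ) and y = (1/ρ)·ln((N−1)·2^{1−ρ}/c^ρ), and set S = exp(−ρx) + (N−1)·exp(−ρy). Then S = 2^ρ c^ρ, and the first-order conditions of the exit equilibrium hold: exp(−ρx)·S^{1/ρ−1} = c and (N−1)·exp(−ρy)·S^{1/ρ−1} = c. Moreover, the outlier's cost at this profile equals S^{1/ρ} + c x = c(2 + x). -/
open Real

/-!
Each of the two summands of `S` equals `(2c)^ρ / 2`: the outlier and the `N − 1` participants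
contribute equally. Hence `S = (2c)^ρ`, so `S^{1/ρ} = 2c`, and each first-order condition
reduces to `(2c)^ρ / 2 · ((2c)^ρ)^{1/ρ − 1} = 2c / 2 = c`.
-/

lemma exp_neg_mul_one_div_mul_log {ρ a : ℝ} (hρ : ρ ≠ 0) (ha : 0 < a) :
    exp (-ρ * (1 / ρ * log a)) = a⁻¹ := by
  rw [show -ρ * (1 / ρ * log a) = -log a by field_simp, exp_neg, exp_log ha]

lemma inv_rpow_one_sub_div_rpow {b c : ℝ} (ρ : ℝ) (hb : 0 < b) (hc : 0 ≤ c) :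
    (b ^ (1 - ρ) / c ^ ρ)⁻¹ = (b * c) ^ ρ / b := by
  have hbρ : b ^ ρ ≠ 0 := (rpow_pos_of_pos hb ρ).ne'
  rw [inv_div, rpow_sub hb, rpow_one, mul_rpow hb.le hc]
  field_simp

lemma rpow_mul_rpow_rpow_one_div_sub_one {b ρ : ℝ} (hb : 0 < b) (hρ : ρ ≠ 0) :
    b ^ ρ * (b ^ ρ) ^ (1 / ρ - 1) = b := by
  rw [← rpow_mul hb.le, ← rpow_add hb, show ρ + ρ * (1 / ρ - 1) = 1 by field_simp; ring,
    rpow_one]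

/-- The exit-equilibrium profile of the approximate weakest-link game:
with `x = (1/ρ)ln(2^{1−ρ}/c^ρ)` (outlier) and `y = (1/ρ)ln((N−1)2^{1−ρ}/c^ρ)`
(participants), the quantity `S = exp(−ρx) + (N−1)exp(−ρy)` equals `2^ρ c^ρ`, the
first-order conditions hold, and the outlier's cost equals `c(2 + x)`. -/
theorem weakest_link_exit_equilibrium
    (ρ c : ℝ) (hρ : 0 < ρ) (hc : 0 < c)
    (N : ℕ) (hN : 2 ≤ N)
    (x y S : ℝ)
    (hx : x = (1 / ρ) * Real.log ((2 : ℝ) ^ (1 - ρ) / c ^ ρ))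
    (hy : y = (1 / ρ) * Real.log (((N : ℝ) - 1) * (2 : ℝ) ^ (1 - ρ) / c ^ ρ))
    (hS : S = Real.exp (-ρ * x) + ((N : ℝ) - 1) * Real.exp (-ρ * y)) :
    S = (2 : ℝ) ^ ρ * c ^ ρ ∧
    Real.exp (-ρ * x) * S ^ (1 / ρ - 1 : ℝ) = c ∧
    ((N : ℝ) - 1) * Real.exp (-ρ * y) * S ^ (1 / ρ - 1 : ℝ) = c ∧
    S ^ (1 / ρ : ℝ) + c * x = c * (2 + x) := by
  have hN1 : (0 : ℝ) < N - 1 := by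
    have : (2 : ℝ) ≤ N := by exact_mod_cast hN
    linarith
  have h2c : 0 < 2 * c := by positivity
  have hx' : exp (-ρ * x) = (2 * c) ^ ρ / 2 := by
    rw [hx, exp_neg_mul_one_div_mul_log hρ.ne' (by positivity),
      inv_rpow_one_sub_div_rpow ρ two_pos hc.le]
  have hy' : (N - 1) * exp (-ρ * y) = (2 * c) ^ ρ / 2 := by
    rw [hy, mul_div_assoc, exp_neg_mul_one_div_mul_log hρ.ne' (by positivity), mul_inv,
      ← mul_assoc, mul_inv_cancel₀ hN1.ne', one_mul, inv_rpow_one_sub_div_rpow ρ two_pos hc.le]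
  have hS' : S = (2 * c) ^ ρ := by rw [hS, hx', hy']; ring
  have hfoc : (2 * c) ^ ρ / 2 * S ^ (1 / ρ - 1) = c := by
    rw [hS', div_mul_eq_mul_div, rpow_mul_rpow_rpow_one_div_sub_one h2c hρ.ne']
    ring
  refine ⟨by rw [hS', mul_rpow zero_le_two hc.le], by rw [hx', hfoc], by rw [hy', hfoc], ?_⟩
  rw [hS', one_div, rpow_rpow_inv h2c.le hρ.ne']
  ring
end

section
/- Let a > 0, let N ≥ 2 be a natural number, and let 0 < c ≤ a + N − 1. Then for every x ∈ ℝ^N with x_i ≥ 0 for all i, ∑_{i=1}^N exp(−a x_i − ∑_{j≠i} x_j) + c ∑_{i=1}^N x_i ≥ (cN/(a+N−1))·(1 + ln((a+N−1)/c)); that is, the symmetric profile x_i = (1/(a+N−1))·ln((a+N−1)/c) for all i is socially optimal, achieving total cost (cN/(a+N−1))(1 + ln((a+N−1)/c)). -/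
open Finset Real

/-- In the weighted total effort game with homogeneous self-dependence `a` and unit
cost `c ≤ a + N − 1`, every nonnegative profile has total cost at least
`(cN/(a+N−1))(1 + ln((a+N−1)/c))`, the value achieved by the symmetric profile
`x_i = (1/(a+N−1))ln((a+N−1)/c)`. -/
theorem wte_social_optimum
    (a : ℝ) (ha : 0 < a) (N : ℕ) (hN : 2 ≤ N)
    (c : ℝ) (hc : 0 < c) (hca : c ≤ a + N - 1)
    (x : Fin N → ℝ) (hx : ∀ i, 0 ≤ x i) :
    c * N / (a + N - 1) * (1 + Real.log ((a + N - 1) / c)) ≤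
      (∑ i, Real.exp (-a * x i - ∑ j ∈ Finset.univ.erase i, x j)) + c * ∑ i, x i := by
  have hN2 : (2:ℝ) ≤ (N:ℝ) := by exact_mod_cast hN
  set w : ℝ := a + N - 1 with hw
  have hw0 : 0 < w := by rw [hw]; linarith
  set S : ℝ := ∑ i, x i with hS
  set L : ℝ := Real.log (w / c) with hL
  have hexpL : Real.exp L = w / c := Real.exp_log (by positivity)
  have key : ∀ i : Fin N, c / w * (-a * x i - (S - x i) + L + 1)
      ≤ Real.exp (-a * x i - ∑ j ∈ Finset.univ.erase i, x j) := by
    intro i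
    have he : ∑ j ∈ Finset.univ.erase i, x j = S - x i := by
      rw [hS, Finset.sum_erase_eq_sub (Finset.mem_univ i)]
    rw [he]
    set t := -a * x i - (S - x i) with ht
    have h1 : t + L + 1 ≤ Real.exp (t + L) := by
      have := Real.add_one_le_exp (t + L); linarith
    have h2 : Real.exp (t + L) = Real.exp t * (w / c) := by
      rw [Real.exp_add, hexpL]
    have hcw : 0 < c / w := by positivity
    calc c / w * (t + L + 1) ≤ c / w * Real.exp (t + L) :=
          mul_le_mul_of_nonneg_left h1 hcw.le
      _ = Real.exp t := by rw [h2]; field_simp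
  have hsum : ∑ i : Fin N, c / w * (-a * x i - (S - x i) + L + 1)
      ≤ ∑ i : Fin N, Real.exp (-a * x i - ∑ j ∈ Finset.univ.erase i, x j) :=
    Finset.sum_le_sum (fun i _ => key i)
  have hcalc : ∑ i : Fin N, c / w * (-a * x i - (S - x i) + L + 1)
      = c * N / w * (1 + L) - c * S := by
    rw [← Finset.mul_sum]
    have h3 : ∀ i : Fin N, -a * x i - (S - x i) + L + 1
        = (1 - a) * x i + (L + 1 - S) := fun i => by ring
    rw [Finset.sum_congr rfl (fun i _ => h3 i), Finset.sum_add_distrib,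
      ← Finset.mul_sum, Finset.sum_const, Finset.card_univ, Fintype.card_fin, ← hS,
      nsmul_eq_mul]
    rw [hw]
    have hne : a + (N:ℝ) - 1 ≠ 0 := by linarith
    field_simp
    ring
  rw [hcalc] at hsum
  linarith [hsum]
end

section
/- Let a > 0 with a ≠ 1, let N ≥ 2 be a natural number, let c > 0, and set D = (a−1)(a+N−1). Define x = (1/D)·ln((a/c)^{a−1}·(1 + (N−2)/a)^{−(N−1)}) and y = (1/D)·ln((a/c)^{a−1}·(1 + (N−2)/a)^{a}). Then (x, y) solves the exit-equilibrium first-order system: a·exp(−a x − (N−1) y) = c and (a+N−2)·exp(−x − (a+N−2) y) = c. -/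
open Real

/-- The interior exit equilibrium of the weighted total effort game: with
`D = (a−1)(a+N−1)`,
`x = (1/D)ln((a/c)^{a−1}(1+(N−2)/a)^{−(N−1)})` and
`y = (1/D)ln((a/c)^{a−1}(1+(N−2)/a)^{a})` solve the first-order system
`a·exp(−ax−(N−1)y) = c` and `(a+N−2)·exp(−x−(a+N−2)y) = c`. -/
theorem wte_interior_exit_equilibrium
    (a : ℝ) (ha : 0 < a) (ha1 : a ≠ 1)
    (N : ℕ) (hN : 2 ≤ N) (c : ℝ) (hc : 0 < c)
    (D x y : ℝ)
    (hD : D = (a - 1) * (a + N - 1))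
    (hx : x = (1 / D) * Real.log ((a / c) ^ (a - 1) *
      (1 + ((N : ℝ) - 2) / a) ^ (-((N : ℝ) - 1))))
    (hy : y = (1 / D) * Real.log ((a / c) ^ (a - 1) *
      (1 + ((N : ℝ) - 2) / a) ^ a)) :
    a * Real.exp (-a * x - ((N : ℝ) - 1) * y) = c ∧
    (a + N - 2) * Real.exp (-x - (a + N - 2) * y) = c := by
  have hN2 : (2:ℝ) ≤ (N:ℝ) := by exact_mod_cast hN
  have hac : (0:ℝ) < a / c := div_pos ha hc
  have hb : (0:ℝ) < 1 + ((N:ℝ) - 2) / a := by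
    have : 0 ≤ ((N:ℝ) - 2) / a := div_nonneg (by linarith) ha.le
    linarith
  have ha1' : a - 1 ≠ 0 := sub_ne_zero.mpr ha1
  have hsum : a + (N:ℝ) - 1 ≠ 0 := ne_of_gt (by linarith)
  have hsum2 : a + (N:ℝ) - 2 ≠ 0 := ne_of_gt (by linarith)
  have hlog1 : Real.log ((a / c) ^ (a - 1) *
      (1 + ((N : ℝ) - 2) / a) ^ (-((N : ℝ) - 1))) =
      (a - 1) * Real.log (a / c) +
      (-((N : ℝ) - 1)) * Real.log (1 + ((N:ℝ) - 2) / a) := by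
    rw [Real.log_mul (ne_of_gt (Real.rpow_pos_of_pos hac _))
      (ne_of_gt (Real.rpow_pos_of_pos hb _)),
      Real.log_rpow hac, Real.log_rpow hb]
  have hlog2 : Real.log ((a / c) ^ (a - 1) *
      (1 + ((N : ℝ) - 2) / a) ^ a) =
      (a - 1) * Real.log (a / c) + a * Real.log (1 + ((N:ℝ) - 2) / a) := by
    rw [Real.log_mul (ne_of_gt (Real.rpow_pos_of_pos hac _))
      (ne_of_gt (Real.rpow_pos_of_pos hb _)),
      Real.log_rpow hac, Real.log_rpow hb]
  constructor
  · have e1 : -a * x - ((N:ℝ) - 1) * y = - Real.log (a / c) := by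
      rw [hx, hy, hlog1, hlog2, hD]
      field_simp
      ring
    rw [e1, Real.exp_neg, Real.exp_log hac]
    field_simp
  · have e2 : -x - (a + (N:ℝ) - 2) * y =
        -(Real.log (a / c) + Real.log (1 + ((N:ℝ) - 2) / a)) := by
      rw [hx, hy, hlog1, hlog2, hD]
      field_simp
      ring
    rw [e2, Real.exp_neg, Real.exp_add, Real.exp_log hac, Real.exp_log hb]
    have key : a / c * (1 + ((N:ℝ) - 2) / a) = (a + (N:ℝ) - 2) / c := by
      field_simp
      ring
    rw [key, inv_div]
    field_simp
end

section
/- Let a > 0, c > 0, and let N ≥ 2 be a natural number with c < a + N − 2. Define y = (1/(a+N−2))·ln((a+N−2)/c). Then a·exp(−(N−1)·y) ≤ c if and only if (1 + (N−2)/a)^{N−1} ≥ (a/c)^{a−1}. Consequently, the exit equilibrium in which the outlier free-rides (invests 0) while each remaining user invests y exists exactly under this parameter condition. -/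
open Real

/-- In the weighted total effort game, with `y = (1/(a+N−2))ln((a+N−2)/c)` the
investment of each remaining participant, the consistency condition for the outlier to
free-ride, `a·exp(−(N−1)y) ≤ c`, holds if and only if
`(1+(N−2)/a)^{N−1} ≥ (a/c)^{a−1}`. -/
theorem wte_freeride_exit_equilibrium_condition
    (a : ℝ) (ha : 0 < a) (c : ℝ) (hc : 0 < c)
    (N : ℕ) (hN : 2 ≤ N) (hca : c < a + N - 2)
    (y : ℝ) (hy : y = (1 / (a + N - 2)) * Real.log ((a + N - 2) / c)) :
    a * Real.exp (-((N : ℝ) - 1) * y) ≤ c ↔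
      (a / c) ^ (a - 1) ≤ (1 + ((N : ℝ) - 2) / a) ^ ((N : ℝ) - 1) := by
  have hb : 0 < a + (N : ℝ) - 2 := hc.trans hca
  have hba : 1 + ((N : ℝ) - 2) / a = (a + (N : ℝ) - 2) / a := by
    field_simp; ring
  have heq : a * Real.exp (-((N : ℝ) - 1) * y)
      = Real.exp (Real.log a + -((N : ℝ) - 1) * y) := by
    rw [Real.exp_add, Real.exp_log ha]
  have h1 : a * Real.exp (-((N : ℝ) - 1) * y) ≤ c ↔
      Real.log a + (-((N : ℝ) - 1) * y) ≤ Real.log c := by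
    rw [heq]
    conv_lhs => rw [← Real.exp_log hc]
    exact Real.exp_le_exp
  have h2 : (a / c) ^ (a - 1) ≤ (1 + ((N : ℝ) - 2) / a) ^ ((N : ℝ) - 1) ↔
      (a - 1) * Real.log (a / c) ≤ ((N : ℝ) - 1) * Real.log ((a + (N : ℝ) - 2) / a) := by
    rw [hba, ← Real.log_le_log_iff (Real.rpow_pos_of_pos (div_pos ha hc) _)
      (Real.rpow_pos_of_pos (div_pos hb ha) _),
      Real.log_rpow (div_pos ha hc), Real.log_rpow (div_pos hb ha)]
  rw [h1, h2, hy, Real.log_div hb.ne' hc.ne', Real.log_div ha.ne' hc.ne',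
    Real.log_div hb.ne' ha.ne']
  rw [show Real.log a + -((N : ℝ) - 1) * (1 / (a + (N : ℝ) - 2) *
      (Real.log (a + (N : ℝ) - 2) - Real.log c))
      = ((a + (N : ℝ) - 2) * Real.log a - ((N : ℝ) - 1) *
        (Real.log (a + (N : ℝ) - 2) - Real.log c)) / (a + (N : ℝ) - 2) from by
    field_simp; ring, div_le_iff₀ hb]
  constructor <;> intro h <;> nlinarith [h]
end

section
/- Let a > 1, let 0 < c < a, and let N ≥ 2 be a natural number. Then (1 + (N−2)/a)^a > (a/c)^{1−a}. Consequently, in the weighted total effort game with self-dependence a > 1, the exit equilibrium in which the outlier invests x = (1/a)ln(a/c) > 0 while all remaining participants invest 0 can never occur. -/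
open Real

/-- For self-dependence `a > 1` and `0 < c < a`, the consistency condition
`(1+(N−2)/a)^a ≤ (a/c)^{1−a}` for the exit equilibrium in which the outlier invests
`(1/a)ln(a/c)` while all remaining participants invest `0` always fails:
`(1+(N−2)/a)^a > (a/c)^{1−a}`. -/
theorem wte_investor_exit_equilibrium_impossible
    (a : ℝ) (ha : 1 < a) (c : ℝ) (hc : 0 < c) (hca : c < a)
    (N : ℕ) (hN : 2 ≤ N) :
    (a / c) ^ (1 - a) < (1 + ((N : ℝ) - 2) / a) ^ a := by
  have h1 : (a / c) ^ (1 - a) < 1 := by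
    apply Real.rpow_lt_one_of_one_lt_of_neg
    · exact (one_lt_div hc).2 hca
    · linarith
  have h2 : (1:ℝ) ≤ (1 + ((N : ℝ) - 2) / a) ^ a := by
    apply Real.one_le_rpow
    · have hN2 : (2:ℝ) ≤ (N:ℝ) := by exact_mod_cast hN
      have : 0 ≤ ((N : ℝ) - 2) / a := div_nonneg (by linarith) (by linarith)
      linarith
    · linarith
  linarith
end

section
/- Let a > 1 and let N ≥ 2 be a natural number. Then ln(1 + (N−1)/a) ≤ 1/(a+N−2) + (a/(a−1))·ln(1 + (N−2)/a). Consequently, in case β of the weighted total effort game (a > 1 with interior exit equilibrium), each participating user's cost at the exit equilibrium exceeds its cost at the social optimum, so the Pivotal mechanism always carries a budget deficit. -/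
open Real

/-- Case β of the weighted total effort game (`a > 1`): the inequality
`ln(1+(N−1)/a) ≤ 1/(a+N−2) + (a/(a−1))ln(1+(N−2)/a)`, which forces the Pivotal
mechanism to carry a budget deficit. -/
theorem wte_case_beta_pivotal_deficit
    (a : ℝ) (ha : 1 < a) (N : ℕ) (hN : 2 ≤ N) :
    Real.log (1 + ((N : ℝ) - 1) / a) ≤
      1 / (a + N - 2) + (a / (a - 1)) * Real.log (1 + ((N : ℝ) - 2) / a) := by
  have hN2 : (2:ℝ) ≤ (N:ℝ) := by exact_mod_cast hN
  have ha0 : 0 < a := by linarith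
  have ht : 0 < a + (N:ℝ) - 2 := by linarith
  have h1 : 1 + ((N:ℝ) - 1) / a = (1 + 1/(a + (N:ℝ) - 2)) * (1 + ((N:ℝ) - 2) / a) := by
    field_simp
    ring
  have hpos1 : (0:ℝ) < 1 + 1/(a + (N:ℝ) - 2) := by positivity
  have hlog1 : Real.log (1 + 1/(a + (N:ℝ) - 2)) ≤ 1/(a + (N:ℝ) - 2) := by
    have := Real.log_le_sub_one_of_pos hpos1
    linarith
  have hx1 : (1:ℝ) ≤ 1 + ((N:ℝ) - 2) / a := by
    have : 0 ≤ ((N:ℝ) - 2) / a := div_nonneg (by linarith) ha0.le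
    linarith
  have hlog2 : 0 ≤ Real.log (1 + ((N:ℝ) - 2) / a) := Real.log_nonneg hx1
  have hcoef : 1 ≤ a / (a - 1) := by
    rw [le_div_iff₀ (by linarith)]
    linarith
  rw [h1, Real.log_mul (ne_of_gt hpos1) (by linarith)]
  have hmul : Real.log (1 + ((N:ℝ) - 2) / a) ≤ (a / (a - 1)) * Real.log (1 + ((N:ℝ) - 2) / a) :=
    le_mul_of_one_le_left hlog2 hcoef
  linarith
end

section
/- Let 0 < a < 1 and let N ≥ 3 be a natural number. Then ln(1 + (N−1)/a) ≥ 1/(a+N−2) + (a/(a−1))·ln(1 + (N−2)/a). Consequently, in case ζ of the weighted total effort game (a < 1 with interior exit equilibrium), each participating user's cost at the exit equilibrium is at most its cost at the social optimum, so the Pivotal mechanism maintains a (weakly) balanced budget. -/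
open Real

/-- Case ζ of the weighted total effort game (`a < 1`): the inequality
`ln(1+(N−1)/a) ≥ 1/(a+N−2) + (a/(a−1))ln(1+(N−2)/a)`, which guarantees that the
Pivotal mechanism maintains a (weakly) balanced budget. -/
theorem wte_case_zeta_pivotal_balanced
    (a : ℝ) (ha0 : 0 < a) (ha1 : a < 1) (N : ℕ) (hN : 3 ≤ N) :
    1 / (a + N - 2) + (a / (a - 1)) * Real.log (1 + ((N : ℝ) - 2) / a) ≤
      Real.log (1 + ((N : ℝ) - 1) / a) := by
  have hN3 : (3:ℝ) ≤ (N:ℝ) := by exact_mod_cast hN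
  have hden : 0 < a + (N:ℝ) - 2 := by linarith
  have h1le : 1 / (a + (N:ℝ) - 2) ≤ 1 := by
    rw [div_le_one hden]; linarith
  have hterm2 : (a / (a - 1)) * Real.log (1 + ((N:ℝ) - 2) / a) ≤ 0 := by
    apply mul_nonpos_of_nonpos_of_nonneg
    · exact div_nonpos_of_nonneg_of_nonpos ha0.le (by linarith)
    · apply Real.log_nonneg
      have : 0 ≤ ((N:ℝ) - 2) / a := div_nonneg (by linarith) ha0.le
      linarith
  have hlog : 1 ≤ Real.log (1 + ((N:ℝ) - 1) / a) := by
    have h2 : (2:ℝ) ≤ ((N:ℝ) - 1) / a := by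
      rw [le_div_iff₀ ha0]; nlinarith
    have hexp : Real.exp 1 ≤ 1 + ((N:ℝ) - 1) / a := by
      have h9 := Real.exp_one_lt_d9
      linarith
    calc (1:ℝ) = Real.log (Real.exp 1) := (Real.log_exp 1).symm
      _ ≤ _ := Real.log_le_log (Real.exp_pos 1) hexp
  linarith
end

section
/- Let 0 < a < 1 and let N ≥ 3 be a natural number. Then ln(1 + (N−1)/a) + ((N−1)/(a−1))·ln(1 + (N−2)/a) ≤ (N−1)/a. Consequently, in case ζ of the weighted total effort game (a < 1 with interior exit equilibrium), the outlier's cost at the social optimum under Externality taxes is at most its cost at the exit equilibrium, so voluntary participation holds in the Externality mechanism. -/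
open Real

/-- Case ζ of the weighted total effort game (`a < 1`): the inequality
`ln(1+(N−1)/a) + ((N−1)/(a−1))ln(1+(N−2)/a) ≤ (N−1)/a`, which guarantees voluntary
participation in the Externality mechanism. -/
theorem wte_case_zeta_externality_vp_holds
    (a : ℝ) (ha0 : 0 < a) (ha1 : a < 1) (N : ℕ) (hN : 3 ≤ N) :
    Real.log (1 + ((N : ℝ) - 1) / a)
        + (((N : ℝ) - 1) / (a - 1)) * Real.log (1 + ((N : ℝ) - 2) / a) ≤
      ((N : ℝ) - 1) / a := by
  have hN3 : (3 : ℝ) ≤ (N : ℝ) := by exact_mod_cast hN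
  have h1 : (0 : ℝ) ≤ ((N : ℝ) - 1) / a := by
    apply div_nonneg <;> linarith
  have h2 : (0 : ℝ) ≤ ((N : ℝ) - 2) / a := by
    apply div_nonneg <;> linarith
  have hlog1 : Real.log (1 + ((N : ℝ) - 1) / a) ≤ ((N : ℝ) - 1) / a := by
    have := Real.log_le_sub_one_of_pos (x := 1 + ((N : ℝ) - 1) / a) (by linarith)
    linarith
  have hlog2 : (0 : ℝ) ≤ Real.log (1 + ((N : ℝ) - 2) / a) :=
    Real.log_nonneg (by linarith)
  have hcoef : ((N : ℝ) - 1) / (a - 1) ≤ 0 :=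
    div_nonpos_of_nonneg_of_nonpos (by linarith) (by linarith)
  nlinarith [mul_nonpos_of_nonpos_of_nonneg hcoef hlog2]
end

section
/- Let N ≥ 3 be a natural number, a > 0, and 0 < c ≤ N − 1. Then ((N−1)/a)·(ln(N/(N−1)) + 1/N − 1) < 1 + ln((N−1)/c). Consequently, in the weighted total effort game with a single dominant user and a < N−1, the sum of the Pivotal taxes, c·[((N−1)/a)(ln(N/(N−1)) − 1 + 1/N) − (1 + ln((N−1)/c))], is negative, i.e., the Pivotal mechanism always carries a budget deficit. -/
open Real

/-! The left side is negative and the right side is nonnegative. Indeed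
`log (N/(N-1)) ≤ N/(N-1) - 1 = 1/(N-1)`, so the bracket is at most `1/(N-1) + 1/N - 1 < 0`
once `N ≥ 3`, while `c ≤ N - 1` makes `log ((N-1)/c) ≥ 0`. -/

lemma Real.log_div_sub_one_le {x : ℝ} (hx : 1 < x) : log (x / (x - 1)) ≤ 1 / (x - 1) := by
  have hx₁ : 0 < x - 1 := by linarith
  calc log (x / (x - 1)) ≤ x / (x - 1) - 1 := log_le_sub_one_of_pos (by positivity)
    _ = 1 / (x - 1) := by field_simp; ring

lemma Real.log_div_sub_one_add_inv_sub_one_neg {x : ℝ} (hx : 3 ≤ x) :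
    log (x / (x - 1)) + 1 / x - 1 < 0 := by
  have hlog := log_div_sub_one_le (by linarith : 1 < x)
  have h₁ : 1 / (x - 1) ≤ 1 / 2 := one_div_le_one_div_of_le (by norm_num) (by linarith)
  have h₂ : 1 / x ≤ 1 / 3 := one_div_le_one_div_of_le (by norm_num) hx
  linarith

/-- Single dominant user, case `a < N − 1`: the inequality
`((N−1)/a)(ln(N/(N−1)) + 1/N − 1) < 1 + ln((N−1)/c)`, showing that the sum of the
Pivotal taxes `c[((N−1)/a)(ln(N/(N−1)) − 1 + 1/N) − (1 + ln((N−1)/c))]` is negative,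
i.e., the Pivotal mechanism always carries a budget deficit. -/
theorem wte_dominant_user_pivotal_deficit
    (N : ℕ) (hN : 3 ≤ N) (a : ℝ) (ha : 0 < a)
    (c : ℝ) (hc : 0 < c) (hcN : c ≤ (N : ℝ) - 1) :
    ((N : ℝ) - 1) / a * (Real.log ((N : ℝ) / ((N : ℝ) - 1)) + 1 / N - 1) <
      1 + Real.log (((N : ℝ) - 1) / c) := by
  have hN₃ : (3 : ℝ) ≤ N := by exact_mod_cast hN
  have hlhs : ((N : ℝ) - 1) / a * (log ((N : ℝ) / ((N : ℝ) - 1)) + 1 / N - 1) < 0 :=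
    mul_neg_of_pos_of_neg (div_pos (by linarith) ha) (log_div_sub_one_add_inv_sub_one_neg hN₃)
  have hrhs : 0 ≤ log (((N : ℝ) - 1) / c) := log_nonneg ((one_le_div hc).mpr hcN)
  linarith
end
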